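/- arXiv:2104.10624 — 2 statements merged into one kernel-verified Lean document; each statement's English description precedes it below -/
import Mathlib

section
/- Let (X, L) be a normally generated polarized variety. For any subspace W ⊆ H⁰(X, L), the natural map K_{p,1}(X, L; W) → K_{p,1}(X, L) is injective for all p ≥ 0. -/
/-!
`K_{p,1}` is written with `p` replaced by `p+1` to avoid natural subtraction.

Normal generation identifies the section ring `Γ_X(L)` with `S/I`, where
`S = Sym H⁰(L) = ℂ[xᵢ : i ∈ σ]` and `I` is the homogeneous ideal of `X ⊆ P(H⁰(L)∨)`; we take
`V = H⁰(L) = Sym¹` and `W ≤ V`. Then `K_{p+1,1}` (for `W` resp. `V`) is the cohomology of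
`Λ^{p+2} → Λ^{p+1} ⊗ V → Λ^p ⊗ (Sym²/I₂)`, and injectivity of the induced map on cohomology
is stated elementwise: a `W`-cocycle which becomes a boundary over `V` is a boundary over `W`.
-/

open ExteriorAlgebra TensorProduct

noncomputable section

/-- `v₁ ∧ ⋯ ∧ vₙ` as an element of the `n`-th exterior power. -/
def expow {R M : Type*} [CommRing R] [AddCommGroup M] [Module R M] (n : ℕ) (v : Fin n → M) :
    ⋀[R]^n M :=
  ⟨ιMulti R n v, ιMulti_range R n ⟨v, rfl⟩⟩

def mulDeg2 {σ : Type*} (v w : MvPolynomial.homogeneousSubmodule σ ℂ 1) :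
    MvPolynomial.homogeneousSubmodule σ ℂ 2 :=
  ⟨(v : MvPolynomial σ ℂ) * (w : MvPolynomial σ ℂ), by
    rw [MvPolynomial.mem_homogeneousSubmodule]
    simpa using
      ((MvPolynomial.mem_homogeneousSubmodule _ _).1 v.2).mul
        ((MvPolynomial.mem_homogeneousSubmodule _ _).1 w.2)⟩

/-- The degree-two part of the section ring `Γ_X(L) = S/I`, namely `Sym²(H⁰(L))/I₂`. -/
def Gamma2 {σ : Type*} (I : Ideal (MvPolynomial σ ℂ)) :=
  (MvPolynomial.homogeneousSubmodule σ ℂ 2) ⧸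
    (Submodule.comap (MvPolynomial.homogeneousSubmodule σ ℂ 2).subtype (I.restrictScalars ℂ))

instance {σ : Type*} (I : Ideal (MvPolynomial σ ℂ)) : AddCommGroup (Gamma2 I) := by
  unfold Gamma2; infer_instance

instance {σ : Type*} (I : Ideal (MvPolynomial σ ℂ)) : Module ℂ (Gamma2 I) := by
  unfold Gamma2; infer_instance

def toGamma2 {σ : Type*} (I : Ideal (MvPolynomial σ ℂ))
    (f : MvPolynomial.homogeneousSubmodule σ ℂ 2) : Gamma2 I :=
  Submodule.Quotient.mk f

/-!
Let `j : W → V` be the inclusion, `r` a retraction of it, `P = j ∘ r` and `Q = 1 - P`.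
If `(Λj ⊗ 1) x = d y`, naturality of the Koszul differential gives
`(Λj ⊗ P) x = d (ΛP y) = (Λj ⊗ 1) (d_W (Λr y))`, so it remains to show `(Λj ⊗ Q) x = 0`.
The wedge map `μ (ω ⊗ v) = v ∧ ω` satisfies `μ ∘ d = n + 2` on `Λ^{n+2} V`, while
`(1 ⊗ Q) ∘ d ∘ μ ∘ (Λj ⊗ 1) = Λj ⊗ Q` because `Q` kills `W`. Applied to `d y` these give
`(Λj ⊗ Q) x = (n + 2) • (Λj ⊗ Q) x`, hence `(Λj ⊗ Q) x = 0` in characteristic zero.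
-/

section

variable {R W V V' : Type*} [CommRing R] [AddCommGroup W] [Module R W]
  [AddCommGroup V] [Module R V] [AddCommGroup V'] [Module R V']

theorem expow_eq_ιMulti (n : ℕ) (v : Fin n → V) : expow n v = exteriorPower.ιMulti R n v := rfl

theorem linearMap_ext_expow {n : ℕ} {N : Type*} [AddCommMonoid N] [Module R N]
    {f g : ⋀[R]^n V →ₗ[R] N} (h : ∀ v, f (expow n v) = g (expow n v)) : f = g :=
  LinearMap.ext_on_range (exteriorPower.ιMulti_span R n V) h

theorem tensorProduct_ext_expow {n : ℕ} {N : Type*} [AddCommMonoid N] [Module R N]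
    {f g : ⋀[R]^n W ⊗[R] V →ₗ[R] N} (h : ∀ w x, f (expow n w ⊗ₜ x) = g (expow n w ⊗ₜ x)) :
    f = g :=
  TensorProduct.ext (linearMap_ext_expow fun w => LinearMap.ext fun x => h w x)

theorem exteriorPower_map_expow (f : W →ₗ[R] V) (n : ℕ) (w : Fin n → W) :
    exteriorPower.map n f (expow n w) = expow n (f ∘ w) :=
  exteriorPower.map_apply_ιMulti f w

theorem neg_one_pow_smul_expow_cons (n : ℕ) (v : Fin (n + 1) → V) (i : Fin (n + 1)) :
    (-1 : R) ^ (i : ℕ) • expow (n + 1) (Fin.cons (v i) (v ∘ i.succAbove)) =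
      expow (R := R) (n + 1) v := by
  have h := (exteriorPower.ιMulti R (n + 1)).map_insertNth i (v i) (i.removeNth v)
  rw [Fin.insertNth_self_removeNth, ← Int.cast_smul_eq_zsmul R] at h
  simp only [expow_eq_ιMulti, h]
  push_cast
  rfl

def koszulDiff (j : W →ₗ[R] V) (n : ℕ) : ⋀[R]^(n + 1) W →ₗ[R] ⋀[R]^n W ⊗[R] V :=
  exteriorPower.alternatingMapLinearEquiv <|
    AlternatingMap.alternatizeUncurryFin (M := W) (N := ⋀[R]^n W ⊗[R] V) <|
      exteriorPower.alternatingMapLinearEquiv.symm.toLinearMap ∘ₗ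
        (TensorProduct.mk R (⋀[R]^n W) V).flip ∘ₗ j

theorem koszulDiff_expow (j : W →ₗ[R] V) (n : ℕ) (w : Fin (n + 1) → W) :
    koszulDiff j n (expow (n + 1) w) =
      ∑ i : Fin (n + 1), (-1 : R) ^ (i : ℕ) • (expow n (w ∘ i.succAbove) ⊗ₜ j (w i)) := by
  simp only [koszulDiff, expow_eq_ιMulti, exteriorPower.alternatingMapLinearEquiv_apply_ιMulti,
    AlternatingMap.alternatizeUncurryFin_apply]
  refine Finset.sum_congr rfl fun i _ => ?_
  rw [← Int.cast_smul_eq_zsmul R]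
  simp
  rfl

def wedgeLeft (n : ℕ) : ⋀[R]^n V ⊗[R] V →ₗ[R] ⋀[R]^(n + 1) V :=
  TensorProduct.lift (exteriorPower.alternatingMapLinearEquiv.toLinearMap ∘ₗ
    (exteriorPower.ιMulti R (n + 1)).curryLeft).flip

theorem wedgeLeft_tmul (n : ℕ) (v : Fin n → V) (x : V) :
    wedgeLeft n (expow n v ⊗ₜ x) = expow (R := R) (n + 1) (Fin.cons x v) := by
  simp [wedgeLeft, expow_eq_ιMulti]
  rfl

theorem koszulDiff_comp_map {W' : Type*} [AddCommGroup W'] [Module R W']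
    (f : W →ₗ[R] V) (g : W →ₗ[R] W') (f' : W' →ₗ[R] V') (h : V →ₗ[R] V')
    (hfg : f' ∘ₗ g = h ∘ₗ f) (n : ℕ) :
    koszulDiff f' n ∘ₗ exteriorPower.map (n + 1) g =
      TensorProduct.map (exteriorPower.map n g) h ∘ₗ koszulDiff f n := by
  apply linearMap_ext_expow
  intro w
  have hfg' (u : W) : f' (g u) = h (f u) := LinearMap.congr_fun hfg u
  simp [exteriorPower_map_expow, koszulDiff_expow, hfg', Function.comp_assoc]

theorem wedgeLeft_comp_koszulDiff (n : ℕ) :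
    wedgeLeft n ∘ₗ koszulDiff (LinearMap.id : V →ₗ[R] V) n = (n + 1) • LinearMap.id := by
  apply linearMap_ext_expow
  intro v
  simp [koszulDiff_expow, wedgeLeft_tmul, neg_one_pow_smul_expow_cons, succ_nsmul]

theorem map_comp_koszulDiff_comp_wedgeLeft_comp_map (j : W →ₗ[R] V) (Q : V →ₗ[R] V')
    (hQ : Q ∘ₗ j = 0) (n : ℕ) :
    TensorProduct.map LinearMap.id Q ∘ₗ koszulDiff LinearMap.id n ∘ₗ wedgeLeft n ∘ₗ
      TensorProduct.map (exteriorPower.map n j) LinearMap.id =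
        TensorProduct.map (exteriorPower.map n j) Q := by
  apply tensorProduct_ext_expow
  intro w x
  have hQj (u : W) : Q (j u) = 0 := LinearMap.congr_fun hQ u
  simp [exteriorPower_map_expow, wedgeLeft_tmul, koszulDiff_expow, Fin.sum_univ_succ, hQj]

end

section Field

variable {K W V V' : Type*} [Field K] [CharZero K] [AddCommGroup W] [Module K W]
  [AddCommGroup V] [Module K V] [AddCommGroup V'] [Module K V']

theorem map_eq_zero_of_koszulDiff_eq (j : W →ₗ[K] V) (Q : V →ₗ[K] V') (hQ : Q ∘ₗ j = 0)
    {n : ℕ} {x : ⋀[K]^(n + 1) W ⊗[K] V} {y : ⋀[K]^(n + 2) V}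
    (hy : koszulDiff LinearMap.id (n + 1) y =
      TensorProduct.map (exteriorPower.map (n + 1) j) LinearMap.id x) :
    TensorProduct.map (exteriorPower.map (n + 1) j) Q x = 0 := by
  set z := TensorProduct.map (exteriorPower.map (n + 1) j) LinearMap.id x
  set a := TensorProduct.map (exteriorPower.map (n + 1) j) Q x
  have hQz : TensorProduct.map LinearMap.id Q z = a := by
    simp only [z, a, ← LinearMap.comp_apply, ← TensorProduct.map_comp, LinearMap.id_comp,
      LinearMap.comp_id]
  have hwedge : wedgeLeft (n + 1) z = (n + 2) • y := by
    rw [← hy, ← LinearMap.comp_apply, wedgeLeft_comp_koszulDiff]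
    rfl
  have hfixed : a = (n + 2) • a :=
    calc a = TensorProduct.map LinearMap.id Q
          (koszulDiff LinearMap.id (n + 1) (wedgeLeft (n + 1) z)) :=
          (LinearMap.congr_fun (map_comp_koszulDiff_comp_wedgeLeft_comp_map j Q hQ _) x).symm
      _ = (n + 2) • a := by rw [hwedge, map_nsmul, map_nsmul, hy, hQz]
  have htorsion : (n + 1) • a = 0 := by
    -- unification does not find this instance through `Submodule.addCommGroup`
    let _ : AddCommGroup (⋀[K]^(n + 1) V ⊗[K] V') := TensorProduct.addCommGroup
    rw [succ_nsmul] at hfixed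
    exact add_eq_right.mp hfixed.symm
  rw [← Nat.cast_smul_eq_nsmul K] at htorsion
  simpa [Nat.cast_add_one_ne_zero] using htorsion

theorem mem_range_koszulDiff_of_map_mem_range {j : W →ₗ[K] V} (hj : Function.Injective j)
    {n : ℕ} {x : ⋀[K]^(n + 1) W ⊗[K] V}
    (hx : TensorProduct.map (exteriorPower.map (n + 1) j) LinearMap.id x ∈
      LinearMap.range (koszulDiff LinearMap.id (n + 1))) :
    x ∈ LinearMap.range (koszulDiff j (n + 1)) := by
  obtain ⟨r, hr⟩ := j.exists_leftInverse_of_injective (LinearMap.ker_eq_bot.mpr hj)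
  obtain ⟨y, hy⟩ := hx
  set P := j ∘ₗ r
  have hPj : P ∘ₗ j = j := by rw [LinearMap.comp_assoc, hr, LinearMap.comp_id]
  have hQ : (LinearMap.id - P) ∘ₗ j = 0 := by
    rw [LinearMap.sub_comp, hPj, LinearMap.id_comp, sub_self]
  have hxP : TensorProduct.map (exteriorPower.map (n + 1) j) LinearMap.id x =
      TensorProduct.map (exteriorPower.map (n + 1) j) P x := by
    rw [← add_sub_cancel P LinearMap.id, TensorProduct.map_add_right, LinearMap.add_apply,
      map_eq_zero_of_koszulDiff_eq j _ hQ hy, add_zero]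
  have hinj : Function.Injective
      (TensorProduct.map (exteriorPower.map (n + 1) j) (LinearMap.id : V →ₗ[K] V)) :=
    Module.Flat.rTensor_preserves_injective_linearMap _ (exteriorPower.map_injective_field hj)
  refine ⟨exteriorPower.map (n + 2) r y, hinj ?_⟩
  calc TensorProduct.map (exteriorPower.map (n + 1) j) LinearMap.id
        (koszulDiff j (n + 1) (exteriorPower.map (n + 2) r y))
      = koszulDiff LinearMap.id (n + 1) (exteriorPower.map (n + 2) P y) := by
        rw [exteriorPower.map_comp, LinearMap.comp_apply]
        exact (LinearMap.congr_fun (koszulDiff_comp_map j j LinearMap.id LinearMap.id rfl _) _).symm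
    _ = TensorProduct.map (exteriorPower.map (n + 1) P) P (koszulDiff LinearMap.id (n + 1) y) :=
        LinearMap.congr_fun (koszulDiff_comp_map LinearMap.id P LinearMap.id P rfl _) y
    _ = TensorProduct.map (exteriorPower.map (n + 1) j) LinearMap.id x := by
        rw [hy, ← LinearMap.comp_apply, ← TensorProduct.map_comp, ← exteriorPower.map_comp, hPj,
          LinearMap.comp_id, hxP]

end Field

theorem koszul_cohomology_map_of_subspace_injective_general
    {σ : Type*} (p : ℕ)
    (I : Ideal (MvPolynomial σ ℂ))                 -- the homogeneous ideal of `X`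
    (W : Submodule ℂ (MvPolynomial σ ℂ))
    (hWV : W ≤ MvPolynomial.homogeneousSubmodule σ ℂ 1)   -- `W ⊆ V = H⁰(X, L)`
    -- the Koszul differentials of the `W`-complex
    (dW1 : ↥(⋀[ℂ]^(p+2) W) →ₗ[ℂ]
      (↥(⋀[ℂ]^(p+1) W)) ⊗[ℂ] (MvPolynomial.homogeneousSubmodule σ ℂ 1))
    (hdW1 : ∀ w : Fin (p+2) → W,
      dW1 (expow (p+2) w) =
        ∑ j : Fin (p+2), ((-1 : ℂ) ^ (j : ℕ)) •
          ((expow (p+1) (w ∘ j.succAbove)) ⊗ₜ[ℂ]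
            (⟨(w j : MvPolynomial σ ℂ), hWV (w j).2⟩ :
              MvPolynomial.homogeneousSubmodule σ ℂ 1)))
    (dW2 : (↥(⋀[ℂ]^(p+1) W)) ⊗[ℂ] (MvPolynomial.homogeneousSubmodule σ ℂ 1) →ₗ[ℂ]
      (↥(⋀[ℂ]^p W)) ⊗[ℂ] (Gamma2 I))
    -- the Koszul differential of the full complex (over `V = H⁰(L)`) in the previous degree
    (dV1 : ↥(⋀[ℂ]^(p+2) (MvPolynomial.homogeneousSubmodule σ ℂ 1)) →ₗ[ℂ]
      (↥(⋀[ℂ]^(p+1) (MvPolynomial.homogeneousSubmodule σ ℂ 1))) ⊗[ℂ]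
        (MvPolynomial.homogeneousSubmodule σ ℂ 1))
    (hdV1 : ∀ v : Fin (p+2) → MvPolynomial.homogeneousSubmodule σ ℂ 1,
      dV1 (expow (p+2) v) =
        ∑ j : Fin (p+2), ((-1 : ℂ) ^ (j : ℕ)) •
          ((expow (p+1) (v ∘ j.succAbove)) ⊗ₜ[ℂ] v j))
    -- the map `Λ^{p+1}W → Λ^{p+1}V` induced by the inclusion `W ⊆ V`
    (em : ↥(⋀[ℂ]^(p+1) W) →ₗ[ℂ]
      ↥(⋀[ℂ]^(p+1) (MvPolynomial.homogeneousSubmodule σ ℂ 1)))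
    (hem : ∀ w : Fin (p+1) → W,
      em (expow (p+1) w) =
        expow (p+1) (fun i =>
          (⟨(w i : MvPolynomial σ ℂ), hWV (w i).2⟩ :
            MvPolynomial.homogeneousSubmodule σ ℂ 1))) :
    -- injectivity of `K_{p+1,1}(X, L; W) → K_{p+1,1}(X, L)`, stated elementwise
    ∀ x : (↥(⋀[ℂ]^(p+1) W)) ⊗[ℂ] (MvPolynomial.homogeneousSubmodule σ ℂ 1),
      dW2 x = 0 →
      (TensorProduct.map em LinearMap.id) x ∈ LinearMap.range dV1 →
      x ∈ LinearMap.range dW1 := by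
  intro x _ hx
  have hdW : dW1 = koszulDiff (Submodule.inclusion hWV) (p + 1) :=
    linearMap_ext_expow fun w => by rw [hdW1, koszulDiff_expow]; rfl
  have hdV : dV1 = koszulDiff LinearMap.id (p + 1) :=
    linearMap_ext_expow fun v => by rw [hdV1, koszulDiff_expow]; rfl
  have hemap : em = exteriorPower.map (p + 1) (Submodule.inclusion hWV) :=
    linearMap_ext_expow fun w => by rw [hem, exteriorPower_map_expow]; rfl
  subst hdW hdV hemap
  exact mem_range_koszulDiff_of_map_mem_range (Submodule.inclusion_injective hWV) hx

theorem koszul_cohomology_map_of_subspace_injective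
    {σ : Type*} [Finite σ] (p : ℕ)
    (I : Ideal (MvPolynomial σ ℂ))                 -- the homogeneous ideal of `X`
    (hIhom : ∀ f ∈ I, ∀ n : ℕ, MvPolynomial.homogeneousComponent n f ∈ I)
    (hIprime : I.IsPrime)                          -- `X` is integral
    (hI1 : ∀ f ∈ I, f.IsHomogeneous 1 → f = 0)     -- `I₁ = 0`  (`L` very ample, `X ⊆ P` nondegenerate)
    (hI0 : ∀ f ∈ I, f.IsHomogeneous 0 → f = 0)     -- `I₀ = 0`
    (W : Submodule ℂ (MvPolynomial σ ℂ))
    (hWV : W ≤ MvPolynomial.homogeneousSubmodule σ ℂ 1)   -- `W ⊆ V = H⁰(X, L)`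
    -- the Koszul differentials of the `W`-complex
    (dW1 : ↥(⋀[ℂ]^(p+2) W) →ₗ[ℂ]
      (↥(⋀[ℂ]^(p+1) W)) ⊗[ℂ] (MvPolynomial.homogeneousSubmodule σ ℂ 1))
    (hdW1 : ∀ w : Fin (p+2) → W,
      dW1 (expow (p+2) w) =
        ∑ j : Fin (p+2), ((-1 : ℂ) ^ (j : ℕ)) •
          ((expow (p+1) (w ∘ j.succAbove)) ⊗ₜ[ℂ]
            (⟨(w j : MvPolynomial σ ℂ), hWV (w j).2⟩ :
              MvPolynomial.homogeneousSubmodule σ ℂ 1)))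
    (dW2 : (↥(⋀[ℂ]^(p+1) W)) ⊗[ℂ] (MvPolynomial.homogeneousSubmodule σ ℂ 1) →ₗ[ℂ]
      (↥(⋀[ℂ]^p W)) ⊗[ℂ] (Gamma2 I))
    (hdW2 : ∀ (w : Fin (p+1) → W) (v : MvPolynomial.homogeneousSubmodule σ ℂ 1),
      dW2 ((expow (p+1) w) ⊗ₜ[ℂ] v) =
        ∑ j : Fin (p+1), ((-1 : ℂ) ^ (j : ℕ)) •
          ((expow p (w ∘ j.succAbove)) ⊗ₜ[ℂ]
            toGamma2 I (mulDeg2 ⟨(w j : MvPolynomial σ ℂ), hWV (w j).2⟩ v)))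
    -- the Koszul differential of the full complex (over `V = H⁰(L)`) in the previous degree
    (dV1 : ↥(⋀[ℂ]^(p+2) (MvPolynomial.homogeneousSubmodule σ ℂ 1)) →ₗ[ℂ]
      (↥(⋀[ℂ]^(p+1) (MvPolynomial.homogeneousSubmodule σ ℂ 1))) ⊗[ℂ]
        (MvPolynomial.homogeneousSubmodule σ ℂ 1))
    (hdV1 : ∀ v : Fin (p+2) → MvPolynomial.homogeneousSubmodule σ ℂ 1,
      dV1 (expow (p+2) v) =
        ∑ j : Fin (p+2), ((-1 : ℂ) ^ (j : ℕ)) •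
          ((expow (p+1) (v ∘ j.succAbove)) ⊗ₜ[ℂ] v j))
    -- the map `Λ^{p+1}W → Λ^{p+1}V` induced by the inclusion `W ⊆ V`
    (em : ↥(⋀[ℂ]^(p+1) W) →ₗ[ℂ]
      ↥(⋀[ℂ]^(p+1) (MvPolynomial.homogeneousSubmodule σ ℂ 1)))
    (hem : ∀ w : Fin (p+1) → W,
      em (expow (p+1) w) =
        expow (p+1) (fun i =>
          (⟨(w i : MvPolynomial σ ℂ), hWV (w i).2⟩ :
            MvPolynomial.homogeneousSubmodule σ ℂ 1))) :
    -- injectivity of `K_{p+1,1}(X, L; W) → K_{p+1,1}(X, L)`, stated elementwise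
    ∀ x : (↥(⋀[ℂ]^(p+1) W)) ⊗[ℂ] (MvPolynomial.homogeneousSubmodule σ ℂ 1),
      dW2 x = 0 →
      (TensorProduct.map em LinearMap.id) x ∈ LinearMap.range dV1 →
      x ∈ LinearMap.range dW1 :=
  koszul_cohomology_map_of_subspace_injective_general p I W hWV dW1 hdW1 dW2 dV1 hdV1 em hem

end
end

section
/- Let C be an integral curve lying on a smooth surface and let A be a rank-one torsion-free sheaf of degree d on C which is globally generated with h⁰(A) = 2. Then there is a short exact sequence 0 → A^∨ → H⁰(A) ⊗ O_C → A → 0, where the surjection is evaluation and the injection sends a local section s of A^∨ to y ⊗ ρ(xs) − x ⊗ ρ(ys) for a basis {x, y} of H⁰(A), ρ : H⁰(A) ⊗ A^∨ → O_C being the natural pairing. -/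
/-!
STATEMENT 10 (Lemma `tf-bpf`, the base-point-free pencil trick for torsion-free sheaves):
for an integral curve `C` on a smooth surface and `A ∈ W¹_d(C) \ W²_d(C)` globally generated,
there is a short exact sequence `0 → A^∨ → H⁰(A) ⊗ O_C → A → 0`, where the surjection is
evaluation and the injection is `s ↦ y ⊗ ρ(xs) − x ⊗ ρ(ys)` for a basis `{x, y}` of `H⁰(A)`.

We formalize the (local) module-theoretic statement over the ring of functions `R` of the
integral curve: `R` is a domain, `A` is a torsion-free `R`-module of rank one,
`A^∨ = Hom_R(A, R)`, the pencil `{x, y}` generates `A` (global generation with `h⁰ = 2`) and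
has no common zero at any maximal ideal (base-point freeness), `H⁰(A) ⊗ O_C ≅ R × R` in the
basis `{x, y}`, and `ρ(x s) = s x`, `ρ(y s) = s y`, so the injection is `s ↦ (−s(y), s(x))`.
-/

theorem basepoint_free_pencil_trick
    {R A : Type*} [CommRing R] [IsDomain R] [AddCommGroup A] [Module R A]
    [NoZeroSMulDivisors R A]                                    -- `A` is torsion free
    (hrkone : ∀ a b : A, ∃ r s : R, (r, s) ≠ 0 ∧ r • a = s • b) -- `A` has rank one
    (x y : A)
    (hgen : ∀ a : A, ∃ r s : R, a = r • x + s • y)              -- the pencil generates `A`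
    (hbpf : ∀ 𝔪 : Ideal R, 𝔪.IsMaximal →                        -- no common zero of `x, y`
      ¬(x ∈ 𝔪 • (⊤ : Submodule R A) ∧ y ∈ 𝔪 • (⊤ : Submodule R A)))
    (i : Module.Dual R A →ₗ[R] R × R)
    (hi : ∀ s : Module.Dual R A, i s = (-(s y), s x))           -- `s ↦ y⊗ρ(xs) − x⊗ρ(ys)`
    (ev : R × R →ₗ[R] A)
    (hev : ∀ rs : R × R, ev rs = rs.1 • x + rs.2 • y) :         -- evaluation of the pencil
    Function.Injective i ∧ Function.Exact i ev ∧ Function.Surjective ev := by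
  -- not both `x` and `y` are zero, by base-point freeness
  have hnz : x ≠ 0 ∨ y ≠ 0 := by
    by_contra h
    push_neg at h
    obtain ⟨𝔪, h𝔪⟩ := Ideal.exists_maximal R
    exact hbpf 𝔪 h𝔪 ⟨h.1 ▸ Submodule.zero_mem _, h.2 ▸ Submodule.zero_mem _⟩
  have hsurj : Function.Surjective ev := by
    intro a
    obtain ⟨r, s, h⟩ := hgen a
    exact ⟨(r, s), by rw [hev]; exact h.symm⟩
  have hinj : Function.Injective i := by
    rw [injective_iff_map_eq_zero]
    intro s hs
    rw [hi] at hs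
    have h1 : s y = 0 := by
      have := congrArg Prod.fst hs
      simpa using this
    have h2 : s x = 0 := congrArg Prod.snd hs
    ext a
    obtain ⟨r, t, rfl⟩ := hgen a
    simp [h1, h2]
  refine ⟨hinj, ?_, hsurj⟩
  rw [LinearMap.exact_iff]
  ext ⟨p, q⟩
  simp only [LinearMap.mem_ker, LinearMap.mem_range, hev]
  constructor
  · -- if `p • x + q • y = 0`, construct `φ` with `i φ = (p, q)`
    intro hpq
    have hqy : q • y = -(p • x) := by
      rw [eq_neg_iff_add_eq_zero, add_comm]; exact hpq
    -- key well-definedness lemma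
    have key : ∀ a b : R, a • x + b • y = 0 → a * q = b * p := by
      intro a b hab
      have hby : b • y = -(a • x) := by
        rw [eq_neg_iff_add_eq_zero, add_comm]; exact hab
      have hx0 : (a * q - b * p) • x = 0 := by
        have : (a * q) • x = (b * p) • x := by
          calc (a * q) • x = q • (a • x) := by rw [mul_comm, mul_smul]
            _ = -(q • (b • y)) := by rw [hby, smul_neg, neg_neg]
            _ = -(b • (q • y)) := by rw [smul_comm]
            _ = b • (p • x) := by rw [hqy, smul_neg, neg_neg]
            _ = (b * p) • x := by rw [mul_smul]
        rw [sub_smul, this, sub_self]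
      have hy0 : (a * q - b * p) • y = 0 := by
        have : (b * p) • y = (a * q) • y := by
          calc (b * p) • y = p • (b • y) := by rw [mul_comm, mul_smul]
            _ = -(p • (a • x)) := by rw [hby, smul_neg]
            _ = -(a • (p • x)) := by rw [smul_comm]
            _ = a • (q • y) := by rw [hqy, smul_neg]
            _ = (a * q) • y := by rw [mul_smul]
        rw [sub_smul, ← this, sub_self]
      rcases hnz with hx | hy
      · rcases smul_eq_zero.mp hx0 with h | h
        · exact sub_eq_zero.mp h
        · exact absurd h hx
      · rcases smul_eq_zero.mp hy0 with h | h
        · exact sub_eq_zero.mp h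
        · exact absurd h hy
    -- define the functional by choosing representations
    classical
    let f : A → R := fun a =>
      (hgen a).choose * q - (hgen a).choose_spec.choose * p
    have hval : ∀ (a : A) (r s : R), a = r • x + s • y → f a = r * q - s * p := by
      intro a r s hrs
      have h1 : a = (hgen a).choose • x + (hgen a).choose_spec.choose • y :=
        (hgen a).choose_spec.choose_spec
      have hdiff : ((hgen a).choose - r) • x + ((hgen a).choose_spec.choose - s) • y = 0 := by
        rw [sub_smul, sub_smul]
        have := h1.symm.trans hrs
        rw [← sub_eq_zero] at this
        rw [← this]; abel
      have := key _ _ hdiff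
      rw [sub_mul, sub_mul, sub_eq_sub_iff_sub_eq_sub] at this
      simpa [f, sub_eq_sub_iff_sub_eq_sub] using this
    have fadd : ∀ a b : A, f (a + b) = f a + f b := by
      intro a b
      obtain ⟨ra, sa, ha⟩ := hgen a
      obtain ⟨rb, sb, hb⟩ := hgen b
      have : a + b = (ra + rb) • x + (sa + sb) • y := by
        rw [ha, hb, add_smul, add_smul]; abel
      rw [hval _ _ _ this, hval _ _ _ ha, hval _ _ _ hb]; ring
    have fsmul : ∀ (c : R) (a : A), f (c • a) = c * f a := by
      intro c a
      obtain ⟨ra, sa, ha⟩ := hgen a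
      have : c • a = (c * ra) • x + (c * sa) • y := by
        rw [ha, smul_add, mul_smul, mul_smul]
      rw [hval _ _ _ this, hval _ _ _ ha]; ring
    refine ⟨{ toFun := f, map_add' := fadd, map_smul' := fun c a => by simpa using fsmul c a }, ?_⟩
    rw [hi]
    have hfx : f x = q := by
      have := hval x 1 0 (by simp)
      simpa using this
    have hfy : f y = -p := by
      have := hval y 0 1 (by simp)
      simpa using this
    simp only [LinearMap.coe_mk, AddHom.coe_mk, hfx, hfy, neg_neg]
  · -- conversely, `ev (i φ) = 0`
    rintro ⟨φ, hφ⟩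
    rw [hi, Prod.mk.injEq] at hφ
    obtain ⟨h1, h2⟩ := hφ
    rw [← h1, ← h2]
    obtain ⟨r, s, hrs, hrx⟩ := hrkone x y
    have hcomm : (φ y) • x = (φ x) • y := by
      by_cases hr : r = 0
      · have hs : s ≠ 0 := by
          intro hs; exact hrs (by simp [hr, hs, Prod.ext_iff])
        have hy0 : y = 0 := by
          have : s • y = 0 := by rw [← hrx, hr, zero_smul]
          rcases smul_eq_zero.mp this with h | h
          · exact absurd h hs
          · exact h
        simp [hy0]
      · have h1 : r • ((φ y) • x) = r • ((φ x) • y) := by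
          calc r • ((φ y) • x) = (φ y) • (r • x) := smul_comm _ _ _
            _ = (φ y) • (s • y) := by rw [hrx]
            _ = (s * φ y) • y := by rw [smul_comm, ← mul_smul]
            _ = (φ (s • y)) • y := by rw [map_smul, smul_eq_mul]
            _ = (φ (r • x)) • y := by rw [hrx]
            _ = (r * φ x) • y := by rw [map_smul, smul_eq_mul]
            _ = r • ((φ x) • y) := by rw [mul_smul]
        have := sub_eq_zero.mpr h1
        rw [← smul_sub] at this
        rcases smul_eq_zero.mp this with h | h
        · exact absurd h hr
        · exact sub_eq_zero.mp h
    simp only [neg_smul, hcomm]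
    abel
end
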